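/- For a connected finite multigraph G = (V,E) with nullity n(G) = |E|−|V|+1, the specialization θ_G(1, ξ−ξ⁻¹) equals ξ^{1−n(G)}·(ξ+ξ⁻¹)^{n(G)−1} + ξ^{n(G)−1}·(ξ+ξ⁻¹)^{n(G)−1}, where θ_G(β,γ) := Σ_{s⊆E} β^{|s|} ∏_{i∈V} f_{d_i(s)}(γ). In particular, θ_G(1,γ) depends only on the nullity n(G); setting ξ=1 gives θ_G(1,0) = 2^{n(G)}, and ξ=(1+√5)/2 gives θ_G(1,1) = ((5−√5)/2)^{n(G)−1} + ((5+√5)/2)^{n(G)−1}. -/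

import Mathlib

open scoped Classical

/-- The polynomials `f_n`: `f 0 = 1`, `f 1 = 0`, `f (n+2) = γ f (n+1) + f n`,
evaluated at `γ`. -/
noncomputable def fval {R : Type*} [CommRing R] (γ : R) : ℕ → R
  | 0 => 1
  | 1 => 0
  | (n + 2) => γ * fval γ (n + 1) + fval γ n

/-- Degree of vertex `i` in the spanning subgraph `(V, s)` of the multigraph with
edge-endpoint map `ends : E → Sym2 V` (a loop counts twice). -/
noncomputable def mdeg {V E : Type*} [DecidableEq V]
    (ends : E → Sym2 V) (s : Finset E) (i : V) : ℕ :=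
  ∑ e ∈ s, (if ends e = Sym2.diag i then 2 else if i ∈ ends e then 1 else 0)

/-- The theta polynomial `θ_G(β,γ) = Σ_{s ⊆ E} β^{|s|} ∏_{i ∈ V} f_{d_i(s)}(γ)`. -/
noncomputable def theta {V E : Type*} [Fintype V] [Fintype E] [DecidableEq V]
    {R : Type*} [CommRing R] (ends : E → Sym2 V) (β γ : R) : R :=
  ∑ s : Finset E, β ^ s.card * ∏ i : V, fval γ (mdeg ends s i)

/-!
Write `γ = a + b` with `a * b = -1` (for `γ = ξ - ξ⁻¹` take `a = ξ`, `b = -ξ⁻¹`). Then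
`f_d(γ) (a - b) = a b^d - b a^d`, so expanding `∏_i f_{d_i(s)}(γ) (a - b)` by choosing one of the two
terms at every vertex writes `θ_G(1, γ) (a - b)^|V|` as a sum over vertex sets `T`. For fixed `T` the
sum over edge sets `s` factorises over the edges, an edge `uv` contributing `1 + t_u t_v` where
`t = b` on `T` and `t = a` off `T`. An edge leaving `T` contributes `1 + a b = 0`, so by connectivity
only `T = V` and `T = ∅` survive, and
`θ_G(1, γ) (a - b)^|V| = a^|V| (1 + b²)^|E| + (-b)^|V| (1 + a²)^|E|`.
-/

open Finset Real

theorem fval_add_mul_sub {R : Type*} [CommRing R] {a b : R} (hab : a * b = -1) (d : ℕ) :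
    fval (a + b) d * (a - b) = a * b ^ d - b * a ^ d := by
  induction d using Nat.twoStepInduction with
  | zero => simp [fval]
  | one => simp [fval, mul_comm]
  | more n ih ih1 =>
    rw [fval]
    linear_combination (a + b) * ih1 + ih + (a * b ^ n - b * a ^ n) * hab

theorem prod_mul_prod_sdiff_eq_pow_mul_prod_ite {ι M : Type*} [Fintype ι] [DecidableEq ι]
    [CommMonoid M] (x y : M) (f g : ι → M) (T : Finset ι) :
    (∏ i ∈ T, x * f i) * ∏ i ∈ univ \ T, y * g i =
      x ^ #T * y ^ #(univ \ T) * ∏ i, if i ∈ T then f i else g i := by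
  have hsplit := prod_piecewise univ T f g
  simp only [piecewise, univ_inter] at hsplit
  rw [hsplit, prod_mul_distrib, prod_mul_distrib, prod_const, prod_const]
  exact mul_mul_mul_comm _ _ _ _

section Multigraph

variable {V E : Type*} [DecidableEq V] (ends : E → Sym2 V)

def IsConnectedMultigraph : Prop :=
  ∀ x y : V, Relation.ReflTransGen (fun u w => ∃ e : E, u ∈ ends e ∧ w ∈ ends e) x y

theorem exists_edge_mem_not_mem (hconn : IsConnectedMultigraph ends) {T : Finset V} {i j : V}
    (hi : i ∈ T) (hj : j ∉ T) : ∃ e u v, ends e = s(u, v) ∧ u ∈ T ∧ v ∉ T := by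
  by_contra! hcut
  refine hj ((hconn i j).rec hi fun _ ⟨e, hu, hw⟩ huT => ?_)
  by_contra hwT
  exact hwT (hcut e _ _ ((Sym2.mem_and_mem_iff (ne_of_mem_of_not_mem huT hwT)).1 ⟨hu, hw⟩) huT)

theorem mdeg_eq_sum_mdeg_singleton (s : Finset E) (i : V) :
    mdeg ends s i = ∑ e ∈ s, mdeg ends {e} i := by
  simp [mdeg]

variable [Fintype V]

theorem prod_pow_mdeg_singleton {M : Type*} [CommMonoid M] (t : V → M) {e : E} {u v : V}
    (h : ends e = s(u, v)) : ∏ i, t i ^ mdeg ends {e} i = t u * t v := by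
  have hdeg : ∀ i, mdeg ends {e} i = (if i = u then 1 else 0) + (if i = v then 1 else 0) := by
    intro i
    rcases eq_or_ne i u with rfl | hu <;> rcases eq_or_ne i v with rfl | hv <;>
      simp_all [mdeg, Sym2.diag, eq_comm]
  simp only [hdeg, pow_add, prod_mul_distrib, pow_ite, pow_one, pow_zero, prod_ite_eq',
    mem_univ, if_true]

theorem prod_const_pow_mdeg_singleton {M : Type*} [CommMonoid M] (c : M) (e : E) :
    ∏ i : V, c ^ mdeg ends {e} i = c * c := by
  induction h : ends e using Sym2.ind with
  | _ u v => exact prod_pow_mdeg_singleton ends (fun _ => c) h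

theorem prod_pow_mdeg {M : Type*} [CommMonoid M] (t : V → M) (s : Finset E) :
    ∏ i, t i ^ mdeg ends s i = ∏ e ∈ s, ∏ i, t i ^ mdeg ends {e} i := by
  simp_rw [mdeg_eq_sum_mdeg_singleton ends s, ← prod_pow_eq_pow_sum]
  exact prod_comm

variable [Fintype E]

theorem sum_prod_pow_mdeg {R : Type*} [CommSemiring R] (t : V → R) :
    ∑ s : Finset E, ∏ i, t i ^ mdeg ends s i = ∏ e, (1 + ∏ i, t i ^ mdeg ends {e} i) := by
  rw [prod_one_add, powerset_univ]
  exact sum_congr rfl fun s _ => prod_pow_mdeg ends t s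

variable {R : Type*} [CommRing R] {a b : R}

theorem prod_one_add_eq_zero_of_cut (hab : a * b = -1) (hconn : IsConnectedMultigraph ends)
    {T : Finset V} (hT : T.Nonempty) (hT' : T ≠ univ) :
    ∏ e, (1 + ∏ i, (if i ∈ T then b else a) ^ mdeg ends {e} i) = 0 := by
  obtain ⟨i, hi⟩ := hT
  obtain ⟨j, -, hj⟩ := exists_of_ssubset (ssubset_univ_iff.2 hT')
  obtain ⟨e, u, v, he, hu, hv⟩ := exists_edge_mem_not_mem ends hconn hi hj
  refine prod_eq_zero (mem_univ e) ?_
  rw [prod_pow_mdeg_singleton ends _ he, if_pos hu, if_neg hv, mul_comm, hab, add_neg_cancel]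

theorem theta_one_add_mul_sub_pow_eq_sum (hab : a * b = -1) :
    theta ends 1 (a + b) * (a - b) ^ Fintype.card V =
      ∑ T : Finset V, a ^ #T * (-b) ^ #(univ \ T) *
        ∏ e, (1 + ∏ i, (if i ∈ T then b else a) ^ mdeg ends {e} i) := by
  have hvertex : ∀ s : Finset E,
      (∏ i, fval (a + b) (mdeg ends s i)) * (a - b) ^ Fintype.card V =
        ∑ T : Finset V, a ^ #T * (-b) ^ #(univ \ T) *
          ∏ i, (if i ∈ T then b else a) ^ mdeg ends s i := by
    intro s
    rw [← card_univ, ← prod_const, ← prod_mul_distrib]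
    simp_rw [fval_add_mul_sub hab, sub_eq_add_neg, ← neg_mul]
    rw [prod_add, powerset_univ]
    simp_rw [prod_mul_prod_sdiff_eq_pow_mul_prod_ite, ite_pow]
  simp only [theta, one_pow, one_mul, sum_mul, hvertex]
  rw [sum_comm]
  simp_rw [← mul_sum, sum_prod_pow_mdeg]

theorem theta_one_add_mul_sub_pow [Nonempty V] (hab : a * b = -1)
    (hconn : IsConnectedMultigraph ends) :
    theta ends 1 (a + b) * (a - b) ^ Fintype.card V =
      a ^ Fintype.card V * (1 + b * b) ^ Fintype.card E +
        (-b) ^ Fintype.card V * (1 + a * a) ^ Fintype.card E := by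
  rw [theta_one_add_mul_sub_pow_eq_sum ends hab,
    Fintype.sum_eq_add univ ∅ univ_nonempty.ne_empty fun T hT => by
      rw [prod_one_add_eq_zero_of_cut ends hab hconn (nonempty_iff_ne_empty.2 hT.2) hT.1,
        mul_zero]]
  simp [prod_const_pow_mdeg_singleton, card_univ]

theorem theta_one_sub_inv [Nonempty V] (hconn : IsConnectedMultigraph ends)
    {K : Type*} [Field K] {ξ : K} (hξ : ξ ≠ 0) (hc : ξ + ξ⁻¹ ≠ 0) :
    theta ends 1 (ξ - ξ⁻¹) =
      (ξ⁻¹ * (ξ + ξ⁻¹)) ^ ((Fintype.card E : ℤ) - Fintype.card V) +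
        (ξ * (ξ + ξ⁻¹)) ^ ((Fintype.card E : ℤ) - Fintype.card V) := by
  have h := theta_one_add_mul_sub_pow ends (a := ξ) (b := -ξ⁻¹) (by field_simp) hconn
  have hX : 1 + -ξ⁻¹ * -ξ⁻¹ = ξ⁻¹ * (ξ + ξ⁻¹) := by field_simp
  have hY : 1 + ξ * ξ = ξ * (ξ + ξ⁻¹) := by field_simp; ring
  rw [← sub_eq_add_neg, sub_neg_eq_add, neg_neg, hX, hY] at h
  generalize theta ends 1 (ξ - ξ⁻¹) = θ at h ⊢
  generalize ξ + ξ⁻¹ = c at h hc ⊢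
  rw [zpow_sub₀ (by positivity), zpow_sub₀ (by positivity), zpow_natCast, zpow_natCast,
    zpow_natCast, zpow_natCast]
  simp only [mul_pow, inv_pow] at h ⊢
  field_simp at h ⊢
  exact h

end Multigraph

/-- For a connected multigraph `G` with nullity `n(G) = |E| - |V| + 1`:
`θ_G(1, ξ-ξ⁻¹) = ξ^{1-n(G)} (ξ+ξ⁻¹)^{n(G)-1} + ξ^{n(G)-1} (ξ+ξ⁻¹)^{n(G)-1}`;
in particular `θ_G(1,0) = 2^{n(G)}` and
`θ_G(1,1) = ((5-√5)/2)^{n(G)-1} + ((5+√5)/2)^{n(G)-1}`. -/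
theorem stmt_16 {V E : Type*} [Fintype V] [Fintype E] [DecidableEq V] [Nonempty V]
    (ends : E → Sym2 V)
    (hconn : ∀ a b : V,
      Relation.ReflTransGen (fun u w => ∃ e : E, u ∈ ends e ∧ w ∈ ends e) a b) :
    (∀ ξ : ℝ, ξ ≠ 0 → ξ + ξ⁻¹ ≠ 0 →
      theta ends (1 : ℝ) (ξ - ξ⁻¹) =
        ξ ^ (1 - ((Fintype.card E : ℤ) - Fintype.card V + 1)) *
          (ξ + ξ⁻¹) ^ (((Fintype.card E : ℤ) - Fintype.card V + 1) - 1) +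
        ξ ^ (((Fintype.card E : ℤ) - Fintype.card V + 1) - 1) *
          (ξ + ξ⁻¹) ^ (((Fintype.card E : ℤ) - Fintype.card V + 1) - 1)) ∧
    theta ends (1 : ℝ) 0 = (2 : ℝ) ^ ((Fintype.card E : ℤ) - Fintype.card V + 1) ∧
    theta ends (1 : ℝ) 1 =
      ((5 - Real.sqrt 5) / 2) ^ (((Fintype.card E : ℤ) - Fintype.card V + 1) - 1) +
      ((5 + Real.sqrt 5) / 2) ^ (((Fintype.card E : ℤ) - Fintype.card V + 1) - 1) := by
  have hexp : ((Fintype.card E : ℤ) - Fintype.card V + 1) - 1 =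
      (Fintype.card E : ℤ) - Fintype.card V := by ring
  refine ⟨fun ξ hξ hc => ?_, ?_, ?_⟩
  · rw [theta_one_sub_inv ends hconn hξ hc, hexp, mul_zpow, mul_zpow, inv_zpow',
      show 1 - ((Fintype.card E : ℤ) - Fintype.card V + 1) =
        -((Fintype.card E : ℤ) - Fintype.card V) by ring]
  · have h := theta_one_sub_inv ends hconn (K := ℝ) one_ne_zero (by norm_num)
    norm_num at h
    rw [h, ← two_mul, ← zpow_one_add₀ two_ne_zero]
    ring_nf
  · have h := theta_one_sub_inv ends hconn goldenRatio_ne_zero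
      (add_pos goldenRatio_pos (inv_pos.2 goldenRatio_pos)).ne'
    rw [inv_goldenRatio, sub_neg_eq_add, goldenRatio_add_goldenConj, ← sub_eq_add_neg,
      goldenRatio_sub_goldenConj] at h
    have h5 : √5 * √5 = 5 := Real.mul_self_sqrt (by norm_num)
    rw [h, hexp, goldenConj, goldenRatio]
    congr 2 <;> linear_combination (1 / 2 : ℝ) * h5
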